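/- arXiv:1508.04264 — 4 statements merged into one kernel-verified Lean document; each statement's English description precedes it below -/
import Mathlib

section
/- In the group G = D_n × Z/2 with n = 2m even, the subgroup H_{1,3} generated by (x², 0), (y, 0), and (e, 1) is isomorphic to D_n if and only if m is odd. -/
/-!
If `m` is even, `(1, z1)` is a central element of `H_{1,3}` that is not a square, since squares in
`G` have trivial `Z/2`-component. In `D_{2m}` with `m` even, every central element is a square:
it is `r 0` or `r m = (r (m/2))²` (for `m = 0` the centre is trivial).

If `m` is odd, `r k ↦ (r (2k), k mod 2)`, `sr k ↦ (sr (2k), k mod 2)` is a homomorphism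
`D_{2m} → G`, injective because `k ↦ (2k, k mod 2)` is injective on `ZMod (2m)` for odd `m`.
Its image is generated by `(r 2, z1)` and `(sr 0, 1)`, the images of `r 1` and `sr 0`, and so is
`H_{1,3}`, because `(r 2, z1) ^ m = (1, z1)`.
-/

open DihedralGroup

def z1 : Multiplicative (ZMod 2) := Multiplicative.ofAdd 1

theorem ZMod.exists_eq_mul_of_two_mul_eq_zero {m : ℕ} {k : ZMod (2 * m)} (hk : 2 * k = 0) :
    ∃ t : ℤ, k = m * t := by
  obtain ⟨j, rfl⟩ := ZMod.intCast_surjective k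
  have h : ((2 * m : ℕ) : ℤ) ∣ 2 * j := by
    rw [← ZMod.intCast_zmod_eq_zero_iff_dvd]
    push_cast
    exact hk
  push_cast at h
  obtain ⟨t, ht⟩ := Int.dvd_of_mul_dvd_mul_left two_ne_zero h
  exact ⟨t, by rw [ht]; push_cast; ring⟩

namespace DihedralGroup

variable {n : ℕ}

theorem closure_r_one_sr_zero :
    Subgroup.closure {r 1, sr 0} = (⊤ : Subgroup (DihedralGroup n)) := by
  have hr : ∀ k : ZMod n, r k ∈ Subgroup.closure {r 1, (sr 0 : DihedralGroup n)} := by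
    intro k
    obtain ⟨j, rfl⟩ := ZMod.intCast_surjective k
    rw [← r_one_zpow]
    exact zpow_mem (Subgroup.subset_closure (by simp)) j
  refine eq_top_iff.mpr fun g _ => ?_
  rcases g with k | k
  · exact hr k
  · simpa only [sr_mul_r, zero_add] using
      mul_mem (Subgroup.subset_closure (by simp : sr 0 ∈ ({r 1, sr 0} : Set (DihedralGroup n))))
        (hr k)

theorem exists_sq_eq_of_mem_center {m : ℕ} (hm : Even m) {g : DihedralGroup (2 * m)}
    (hg : g ∈ Subgroup.center _) : ∃ h, h ^ 2 = g := by
  rw [Subgroup.mem_center_iff] at hg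
  rcases g with i | i
  · have h2i : 2 * i = 0 := by
      have := sr.inj (hg (sr 0))
      linear_combination this
    obtain ⟨t, rfl⟩ := ZMod.exists_eq_mul_of_two_mul_eq_zero h2i
    obtain ⟨k, rfl⟩ := hm
    exact ⟨r (k * t), by rw [r_pow]; push_cast; ring_nf⟩
  · have h2 : ((2 : ℕ) : ZMod (2 * m)) = 0 := by
      have := sr.inj (hg (r 1))
      push_cast
      linear_combination -this
    rw [ZMod.natCast_eq_zero_iff] at h2
    have : m ∣ 1 := Nat.dvd_of_mul_dvd_mul_left two_pos (by simpa using h2)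
    rw [Nat.dvd_one.mp this] at hm
    exact (Nat.not_even_one hm).elim

def doubleWithParity (χ : ZMod n →+ ZMod 2) :
    DihedralGroup n →* DihedralGroup n × Multiplicative (ZMod 2) where
  toFun
    | r k => (r (2 * k), .ofAdd (χ k))
    | sr k => (sr (2 * k), .ofAdd (χ k))
  map_one' := by simp only [one_def, mul_zero, map_zero, ofAdd_zero]; rfl
  map_mul' := by
    have hχ : ∀ i j, χ (j - i) = χ i + χ j := fun i j => by
      rw [map_sub, CharTwo.sub_eq_add, add_comm]
    rintro (i | i) (j | j) <;>
      simp only [r_mul_r, r_mul_sr, sr_mul_r, sr_mul_sr, Prod.mk_mul_mk, ← ofAdd_add, map_add,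
        hχ, mul_add, mul_sub]

@[simp] theorem doubleWithParity_r (χ : ZMod n →+ ZMod 2) (k : ZMod n) :
    doubleWithParity χ (r k) = (r (2 * k), .ofAdd (χ k)) := rfl

@[simp] theorem doubleWithParity_sr (χ : ZMod n →+ ZMod 2) (k : ZMod n) :
    doubleWithParity χ (sr k) = (sr (2 * k), .ofAdd (χ k)) := rfl

end DihedralGroup

theorem z1_ne_one : z1 ≠ 1 := by decide

theorem sq_eq_one_multiplicative_zmod_two (ε : Multiplicative (ZMod 2)) : ε ^ 2 = 1 := by
  decide +revert

theorem z1_pow_of_odd {m : ℕ} (hm : Odd m) : z1 ^ m = z1 := by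
  rw [z1, ← ofAdd_nsmul, nsmul_one, ZMod.natCast_eq_one_iff_odd.mpr hm]

def parity (m : ℕ) : ZMod (2 * m) →+ ZMod 2 :=
  (ZMod.castHom (dvd_mul_right 2 m) (ZMod 2)).toAddMonoidHom

theorem parity_natCast_mul (m : ℕ) (t : ℤ) : parity m (m * t) = m * t := by
  simp [parity]

theorem injective_doubleWithParity_parity {m : ℕ} (hm : Odd m) :
    Function.Injective (doubleWithParity (parity m)) := by
  rw [injective_iff_map_eq_one]
  rintro (k | k) hk
  · rw [doubleWithParity_r, Prod.mk_eq_one, one_def] at hk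
    obtain ⟨t, rfl⟩ := ZMod.exists_eq_mul_of_two_mul_eq_zero (r.inj hk.1)
    have ht : Even t := by
      rw [← ZMod.intCast_eq_zero_iff_even, ← one_mul (t : ZMod 2),
        ← ZMod.natCast_eq_one_iff_odd.mpr hm, ← parity_natCast_mul]
      exact hk.2
    obtain ⟨s, rfl⟩ := ht
    rw [one_def]
    congr 1
    have h2m := ZMod.natCast_self (2 * m)
    push_cast at h2m ⊢
    linear_combination (s : ZMod (2 * m)) * h2m
  · rw [doubleWithParity_sr, Prod.mk_eq_one, one_def] at hk
    cases hk.1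

def H₁₃ (n : ℕ) : Subgroup (DihedralGroup n × Multiplicative (ZMod 2)) :=
  Subgroup.closure {(r 2, 1), (sr 0, 1), (1, z1)}

theorem H₁₃_eq_closure_of_odd {m : ℕ} (hm : Odd m) :
    H₁₃ (2 * m) = Subgroup.closure {(r 2, z1), (sr 0, 1)} := by
  have hz : ((1 : DihedralGroup (2 * m)), z1) = (r 2, z1) ^ m := by
    rw [Prod.pow_mk, r_pow, z1_pow_of_odd hm, one_def]
    congr 2
    have h2m := ZMod.natCast_self (2 * m)
    push_cast at h2m ⊢
    linear_combination -h2m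
  apply le_antisymm <;> rw [H₁₃, Subgroup.closure_le]
  · set K := Subgroup.closure {((r 2, z1) : DihedralGroup (2 * m) × _), (sr 0, 1)}
    have hz_mem : ((1 : DihedralGroup (2 * m)), z1) ∈ K :=
      hz ▸ pow_mem (Subgroup.subset_closure (by simp)) m
    rintro g (rfl | rfl | rfl)
    · have h : ((r 2, 1) : DihedralGroup (2 * m) × _) = (r 2, z1) * (1, z1) := by
        rw [Prod.mk_mul_mk, mul_one, ← sq, sq_eq_one_multiplicative_zmod_two]
      exact h ▸ mul_mem (Subgroup.subset_closure (by simp)) hz_mem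
    · exact Subgroup.subset_closure (by simp)
    · exact hz_mem
  · rintro g (rfl | rfl)
    · have h : ((r 2, z1) : DihedralGroup (2 * m) × _) = (r 2, 1) * (1, z1) := by
        rw [Prod.mk_mul_mk, mul_one, one_mul]
      exact h ▸ mul_mem (Subgroup.subset_closure (by simp)) (Subgroup.subset_closure (by simp))
    · exact Subgroup.subset_closure (by simp)

theorem range_doubleWithParity_parity {m : ℕ} (hm : Odd m) :
    (doubleWithParity (parity m)).range = H₁₃ (2 * m) := by
  rw [H₁₃_eq_closure_of_odd hm, MonoidHom.range_eq_map, ← closure_r_one_sr_zero,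
    MonoidHom.map_closure, Set.image_pair]
  simp [parity, z1]

theorem isEmpty_H₁₃_mulEquiv_of_even {m : ℕ} (hm : Even m) :
    IsEmpty (H₁₃ (2 * m) ≃* DihedralGroup (2 * m)) := by
  refine ⟨fun f => ?_⟩
  let c : H₁₃ (2 * m) := ⟨(1, z1), Subgroup.subset_closure (by simp)⟩
  have hc : c ∈ Subgroup.center _ :=
    Subgroup.mem_center_iff.mpr fun g => Subtype.ext (Prod.ext (by simp [c]) (mul_comm _ _))
  obtain ⟨h, hh⟩ := exists_sq_eq_of_mem_center hm (MulEquivClass.apply_mem_center f hc)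
  have hc_sq : c = f.symm h ^ 2 := by rw [← map_pow, hh, f.symm_apply_apply]
  have := congrArg
    (fun x : H₁₃ (2 * m) => (x : DihedralGroup (2 * m) × Multiplicative (ZMod 2)).2) hc_sq
  simp only [c, SubgroupClass.coe_pow, Prod.pow_snd, sq_eq_one_multiplicative_zmod_two] at this
  exact z1_ne_one this

theorem stmt1_general (m n : ℕ) (hn : n = 2 * m) :
    Nonempty
      ((Subgroup.closure
          ({((r 2, 1)), ((sr 0, 1)), ((1, z1))} :
            Set (DihedralGroup n × Multiplicative (ZMod 2)))) ≃*
        DihedralGroup n) ↔ Odd m := by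
  subst hn
  refine ⟨fun ⟨f⟩ => ?_, fun hodd => ?_⟩
  · by_contra hnot
    exact (isEmpty_H₁₃_mulEquiv_of_even (Nat.not_odd_iff_even.mp hnot)).false f
  · rw [← H₁₃, ← range_doubleWithParity_parity hodd]
    exact ⟨(MonoidHom.ofInjective (injective_doubleWithParity_parity hodd)).symm⟩

/-- In `G = D_n × Z/2` with `n = 2m` even, the subgroup `H_{1,3}`
generated by `(x²,0)`, `(y,0)`, `(e,1)` is isomorphic to `D_n` iff `m` is odd. -/
theorem stmt1 (m n : ℕ) (hm : 0 < m) (hn : n = 2 * m) :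
    Nonempty
      ((Subgroup.closure
          ({((r 2, 1)), ((sr 0, 1)), ((1, z1))} :
            Set (DihedralGroup n × Multiplicative (ZMod 2)))) ≃*
        DihedralGroup n) ↔ Odd m :=
  stmt1_general m n hn
end

section
/- Let n = 4h with h odd and G = D_n ⋊ ⟨β⟩ as above (β acting by y ↦ y x², x ↦ x^{2h-1}). For any integer k, the element (y x^k, β) squares to (x^{2kh - 2k + 2}, e), which is never the identity. -/
open DihedralGroup

/-- Let `n = 4h`, `h` odd, and `G = D_n ⋊ ⟨β⟩` with `β` acting by
`x ↦ x^{2h-1}`, `y ↦ y x²`.  For every integer `k`, the element `(y x^k, β)`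
squares to `(x^{2kh - 2k + 2}, e)`, which is never the identity. -/
theorem stmt6 (h n : ℕ) (hh : Odd h) (hn : n = 4 * h)
    (φ : Multiplicative (ZMod 2) →* MulAut (DihedralGroup n))
    (hφx : φ z1 (r 1) = r (2 * h - 1 : ℕ))
    (hφy : φ z1 (sr 0) = sr 2)
    (k : ℕ) :
    (⟨sr (k : ZMod n), z1⟩ : DihedralGroup n ⋊[φ] Multiplicative (ZMod 2)) ^ 2 =
        ⟨r ((2 * k * h - 2 * k + 2 : ℕ) : ZMod n), 1⟩ ∧
      (⟨sr (k : ZMod n), z1⟩ : DihedralGroup n ⋊[φ] Multiplicative (ZMod 2)) ^ 2 ≠ 1 := by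
  have h1 : 1 ≤ h := hh.pos
  have h2 : ((2 * h - 1 : ℕ) : ZMod n) = 2 * (h : ZMod n) - 1 := by
    push_cast [Nat.cast_sub (by omega : 1 ≤ 2 * h)]
    ring
  have hsrk : (sr (k : ZMod n) : DihedralGroup n) = sr 0 * r 1 ^ k := by
    rw [r_one_pow, sr_mul_r, zero_add]
  have hφsrk : φ z1 (sr (k : ZMod n)) = sr ((2 : ZMod n) + ((2 * h - 1 : ℕ) : ZMod n) * (k : ZMod n)) := by
    rw [hsrk, map_mul, map_pow, hφy, hφx, ← r_one_pow (2 * h - 1), ← pow_mul, r_one_pow,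
      sr_mul_r]
    push_cast
    ring_nf
  have keyN : (2 * k * h - 2 * k + 2 : ℕ) = 2 * k * (h - 1) + 2 := by
    congr 1
    rw [Nat.mul_sub]
    simp
  have key : ((2 * k * h - 2 * k + 2 : ℕ) : ZMod n)
      = (2 : ZMod n) + ((2 * h - 1 : ℕ) : ZMod n) * k - k := by
    rw [keyN]
    push_cast [Nat.cast_sub h1, h2]
    ring
  have hsq : (⟨sr (k : ZMod n), z1⟩ : DihedralGroup n ⋊[φ] Multiplicative (ZMod 2)) ^ 2 =
      ⟨r ((2 * k * h - 2 * k + 2 : ℕ) : ZMod n), 1⟩ := by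
    rw [sq]
    ext
    · rw [SemidirectProduct.mul_left]
      simp only [hφsrk, sr_mul_sr]
      rw [key]
    · rw [SemidirectProduct.mul_right]
      show z1 * z1 = 1
      decide
  refine ⟨hsq, ?_⟩
  rw [hsq]
  intro hc
  have hl := congrArg SemidirectProduct.left hc
  simp only [SemidirectProduct.one_left, one_def] at hl
  have hz : ((2 * k * h - 2 * k + 2 : ℕ) : ZMod n) = 0 := by injection hl
  have hne : NeZero n := ⟨by omega⟩
  rw [ZMod.natCast_eq_zero_iff] at hz
  obtain ⟨m, hm⟩ := hh
  rw [keyN, hn] at hz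
  have h4 : 4 ∣ 2 * k * (h - 1) + 2 := dvd_trans ⟨h, by ring⟩ hz
  have e : h - 1 = 2 * m := by omega
  rw [e, show 2 * k * (2 * m) + 2 = 4 * (k * m) + 2 from by ring] at h4
  omega
end

section
/- For n = 2m even, the six elements (y,1), (y x^m,1), (y x,1), (y x,1), (x^m,1), (e,1) of G = D_n × Z/2 have product equal to the identity, each has order 2, and together they generate G. -/
open DihedralGroup

/-- For `n = 2m` even, the six elements
`(y,1),(yx^m,1),(yx,1),(yx,1),(x^m,1),(e,1)` of `G = D_n × Z/2` multiply to
the identity, each has order 2, and together they generate `G`. -/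
theorem stmt10 (m n : ℕ) (hm : 0 < m) (hn : n = 2 * m) :
    (((sr 0, z1) : DihedralGroup n × Multiplicative (ZMod 2)) * (sr (m : ZMod n), z1) *
        (sr 1, z1) * (sr 1, z1) * (r (m : ZMod n), z1) * (1, z1) = 1) ∧
      (orderOf ((sr 0, z1) : DihedralGroup n × Multiplicative (ZMod 2)) = 2 ∧
        orderOf ((sr (m : ZMod n), z1) : DihedralGroup n × Multiplicative (ZMod 2)) = 2 ∧
        orderOf ((sr 1, z1) : DihedralGroup n × Multiplicative (ZMod 2)) = 2 ∧
        orderOf ((r (m : ZMod n), z1) : DihedralGroup n × Multiplicative (ZMod 2)) = 2 ∧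
        orderOf ((1, z1) : DihedralGroup n × Multiplicative (ZMod 2)) = 2) ∧
      Subgroup.closure
        ({(sr 0, z1), (sr (m : ZMod n), z1), (sr 1, z1), (r (m : ZMod n), z1), (1, z1)} :
          Set (DihedralGroup n × Multiplicative (ZMod 2))) = ⊤ := by
  haveI : NeZero n := ⟨by omega⟩
  have hz2 : z1 * z1 = 1 := by decide
  have hz1 : z1 ≠ 1 := by decide
  have hmm : ((m : ZMod n) + (m : ZMod n)) = 0 := by
    rw [← Nat.cast_add]
    have : m + m = n := by omega
    rw [this, ZMod.natCast_self]
  have hrm2 : (r (m : ZMod n) : DihedralGroup n) * r (m : ZMod n) = 1 := by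
    rw [r_mul_r, hmm, one_def]
  -- order of 2 for each element
  have hord : ∀ a : DihedralGroup n, a * a = 1 →
      orderOf ((a, z1) : DihedralGroup n × Multiplicative (ZMod 2)) = 2 := by
    intro a ha
    apply orderOf_eq_prime
    · rw [sq, Prod.mk_mul_mk, ha, hz2]; rfl
    · intro h
      exact hz1 (congrArg Prod.snd h)
  refine ⟨?_, ⟨?_, ?_, ?_, ?_, ?_⟩, ?_⟩
  · ext
    · simp only [Prod.fst_mul, Prod.fst_one]
      rw [sr_mul_sr, r_mul_sr, sr_mul_sr, r_mul_r]
      show r _ * 1 = 1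
      rw [mul_one]
      rw [sub_zero, sub_sub_cancel, hmm, ← one_def]
    · show z1 * z1 * z1 * z1 * z1 * z1 = 1
      rw [hz2, one_mul, hz2, one_mul, hz2]
  · exact hord _ (sr_mul_self 0)
  · exact hord _ (sr_mul_self _)
  · exact hord _ (sr_mul_self 1)
  · exact hord _ hrm2
  · exact hord _ (one_mul 1)
  · rw [eq_top_iff]
    rintro ⟨g, c⟩ -
    set S : Set (DihedralGroup n × Multiplicative (ZMod 2)) :=
      {(sr 0, z1), (sr (m : ZMod n), z1), (sr 1, z1), (r (m : ZMod n), z1), (1, z1)} with hS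
    have h1 : ((1 : DihedralGroup n), z1) ∈ Subgroup.closure S :=
      Subgroup.subset_closure (by simp [hS])
    have hsr0 : ((sr 0 : DihedralGroup n), z1) ∈ Subgroup.closure S :=
      Subgroup.subset_closure (by simp [hS])
    have hsr1 : ((sr 1 : DihedralGroup n), z1) ∈ Subgroup.closure S :=
      Subgroup.subset_closure (by simp [hS])
    have hr1 : ((r 1 : DihedralGroup n), (1 : Multiplicative (ZMod 2))) ∈
        Subgroup.closure S := by
      have := mul_mem hsr0 hsr1
      rwa [Prod.mk_mul_mk, sr_mul_sr, sub_zero, hz2] at this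
    have hsr0' : ((sr 0 : DihedralGroup n), (1 : Multiplicative (ZMod 2))) ∈
        Subgroup.closure S := by
      have := mul_mem hsr0 h1
      rwa [Prod.mk_mul_mk, mul_one, hz2] at this
    have hr : ∀ i : ZMod n, ((r i : DihedralGroup n), (1 : Multiplicative (ZMod 2))) ∈
        Subgroup.closure S := by
      intro i
      have := pow_mem hr1 i.val
      rwa [Prod.pow_mk, one_pow, r_one_pow, ZMod.natCast_val, ZMod.cast_id] at this
    have hg : (g, (1 : Multiplicative (ZMod 2))) ∈ Subgroup.closure S := by
      cases g with
      | r i => exact hr i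
      | sr i =>
        have := mul_mem hsr0' (hr i)
        rwa [Prod.mk_mul_mk, sr_mul_r, zero_add, one_mul] at this
    have hc : c = 1 ∨ c = z1 := by revert c; decide
    have hc' : ((1 : DihedralGroup n), c) ∈ Subgroup.closure S := by
      rcases hc with h | h <;> rw [h]
      · exact one_mem _
      · exact h1
    have := mul_mem hg hc'
    rwa [Prod.mk_mul_mk, mul_one, one_mul] at this
end

section
/- (Dihedral braid normalization) Let v = (v₁,…,v_r) be a tuple in D_n containing three consecutive reflections y x^a, y x^b, y x^c at positions i, i+1, i+2. Then v is equivalent, via braid moves affecting only these three entries, to a tuple in which the first two of the three reflections are equal, or to one in which the last two are equal. (Braid move σ_i replaces (v_i, v_{i+1}) by (v_i v_{i+1} v_i⁻¹, v_i).) -/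
open DihedralGroup

/-- A single braid move on a triple: either `σ₁` acting on the first two
entries, or `σ₂` acting on the last two entries, where
`σ : (u, v) ↦ (u v u⁻¹, u)`. -/
def braidMove (n : ℕ)
    (v w : DihedralGroup n × DihedralGroup n × DihedralGroup n) : Prop :=
  w = (v.1 * v.2.1 * v.1⁻¹, v.1, v.2.2) ∨
    w = (v.1, v.2.1 * v.2.2 * v.2.1⁻¹, v.2.1)

lemma sr_inv (n : ℕ) (i : ZMod n) : (sr i : DihedralGroup n)⁻¹ = sr i :=
  inv_eq_of_mul_eq_one_right (sr_mul_self i)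

lemma conj_sr (n : ℕ) (i j : ZMod n) :
    (sr i : DihedralGroup n) * sr j * (sr i)⁻¹ = sr (2 * i - j) := by
  rw [sr_inv, sr_mul_sr, r_mul_sr]
  ring_nf

/-- σ₁ move in coordinates (a, p, q) ↦ (a+p, p, q+p). -/
lemma move1 (n : ℕ) (a p q : ZMod n) :
    braidMove n (sr a, sr (a - p), sr (a - p - q))
      (sr (a + p), sr ((a + p) - p), sr ((a + p) - p - (q + p))) := by
  left
  simp only [conj_sr, Prod.mk.injEq]
  refine ⟨by congr 1; ring, by congr 1; ring, by congr 1; ring⟩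

/-- σ₂ move in coordinates (a, p, q) ↦ (a, p−q, q). -/
lemma move2 (n : ℕ) (a p q : ZMod n) :
    braidMove n (sr a, sr (a - p), sr (a - p - q))
      (sr a, sr (a - (p - q)), sr (a - (p - q) - q)) := by
  right
  simp only [conj_sr, Prod.mk.injEq]
  refine ⟨trivial, by congr 1; ring, by congr 1; ring⟩

lemma key (n : ℕ) : ∀ N : ℕ, ∀ p q : ℤ, p.natAbs + q.natAbs ≤ N → ∀ a : ZMod n,
    ∃ a' b' c' : ZMod n,
      Relation.EqvGen (braidMove n)
        (sr a, sr (a - (p : ZMod n)), sr (a - (p : ZMod n) - (q : ZMod n)))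
        (sr a', sr b', sr c') ∧ (a' = b' ∨ b' = c') := by
  intro N
  induction N with
  | zero =>
    intro p q h a
    have hp : p = 0 := by omega
    exact ⟨a, a - (p : ZMod n), a - (p : ZMod n) - (q : ZMod n),
      Relation.EqvGen.refl _, Or.inl (by simp [hp])⟩
  | succ N ih =>
    intro p q h a
    by_cases hp : p = 0
    · exact ⟨a, a - (p : ZMod n), a - (p : ZMod n) - (q : ZMod n),
        Relation.EqvGen.refl _, Or.inl (by simp [hp])⟩
    by_cases hq : q = 0
    · exact ⟨a, a - (p : ZMod n), a - (p : ZMod n) - (q : ZMod n),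
        Relation.EqvGen.refl _, Or.inr (by simp [hq])⟩
    by_cases hle : p.natAbs ≤ q.natAbs
    · -- reduce q, using σ₁ (change a too) or its inverse
      by_cases hs : (q - p).natAbs < q.natAbs
      · -- use σ₁⁻¹ : from (a - p, p, q - p) σ₁ goes to (a, p, q)
        obtain ⟨a', b', c', hrel, heq⟩ := ih p (q - p) (by omega) (a - (p : ZMod n))
        refine ⟨a', b', c', ?_, heq⟩
        refine Relation.EqvGen.trans _ _ _ ?_ hrel
        refine Relation.EqvGen.symm _ _ ?_
        have := move1 n (a - (p : ZMod n)) (p : ZMod n) ((q : ZMod n) - (p : ZMod n))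
        refine Relation.EqvGen.rel _ _ ?_
        have e1 : a - (p : ZMod n) + (p : ZMod n) = a := by ring
        have e2 : (q : ZMod n) - (p : ZMod n) + (p : ZMod n) = (q : ZMod n) := by ring
        rw [e1, e2] at this
        convert this using 3 <;> push_cast <;> ring
      · -- use σ₁ : from (a, p, q) to (a + p, p, q + p), with |q + p| < |q|
        have hs' : (q + p).natAbs < q.natAbs := by omega
        obtain ⟨a', b', c', hrel, heq⟩ := ih p (q + p) (by omega) (a + (p : ZMod n))
        refine ⟨a', b', c', ?_, heq⟩
        refine Relation.EqvGen.trans _ _ _ ?_ hrel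
        refine Relation.EqvGen.rel _ _ ?_
        have := move1 n a (p : ZMod n) (q : ZMod n)
        convert this using 3 <;> push_cast <;> ring
    · -- reduce p, using σ₂ or its inverse
      by_cases hs : (p - q).natAbs < p.natAbs
      · -- σ₂ : (a, p, q) to (a, p - q, q)
        obtain ⟨a', b', c', hrel, heq⟩ := ih (p - q) q (by omega) a
        refine ⟨a', b', c', ?_, heq⟩
        refine Relation.EqvGen.trans _ _ _ ?_ hrel
        refine Relation.EqvGen.rel _ _ ?_
        have := move2 n a (p : ZMod n) (q : ZMod n)
        convert this using 3 <;> push_cast <;> ring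
      · -- σ₂⁻¹ : from (a, p + q, q) σ₂ goes to (a, p, q)
        have hs' : (p + q).natAbs < p.natAbs := by omega
        obtain ⟨a', b', c', hrel, heq⟩ := ih (p + q) q (by omega) a
        refine ⟨a', b', c', ?_, heq⟩
        refine Relation.EqvGen.trans _ _ _ ?_ hrel
        refine Relation.EqvGen.symm _ _ ?_
        refine Relation.EqvGen.rel _ _ ?_
        have := move2 n a ((p : ZMod n) + (q : ZMod n)) (q : ZMod n)
        have e : (p : ZMod n) + (q : ZMod n) - (q : ZMod n) = (p : ZMod n) := by ring
        rw [e] at this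
        convert this using 3 <;> push_cast <;> ring

/-- Lemma 2.1 of [CLP1]: any triple of reflections
`(y x^a, y x^b, y x^c)` in `D_n` is equivalent, via braid moves (and their
inverses) affecting only these three entries, to a triple of reflections in
which the first two entries agree or the last two entries agree. -/
theorem stmt13 (n : ℕ) (a b c : ZMod n) :
    ∃ a' b' c' : ZMod n,
      Relation.EqvGen (braidMove n) (sr a, sr b, sr c) (sr a', sr b', sr c') ∧
        (a' = b' ∨ b' = c') := by
  set p : ℤ := ZMod.cast (a - b) with hp
  set q : ℤ := ZMod.cast (b - c) with hq
  have hpc : (p : ZMod n) = a - b := ZMod.intCast_zmod_cast _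
  have hqc : (q : ZMod n) = b - c := ZMod.intCast_zmod_cast _
  obtain ⟨a', b', c', hrel, heq⟩ := key n (p.natAbs + q.natAbs) p q le_rfl a
  refine ⟨a', b', c', ?_, heq⟩
  rw [hpc, hqc] at hrel
  have e1 : a - (a - b) = b := by ring
  have e2 : b - (b - c) = c := by ring
  rwa [e1, e2] at hrel
end
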